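/- There are never three consecutive positive terms in the infinity series: for all n, at least one of s(n), s(n+1), s(n+2) is ≤ 0. -/
import Mathlib


def s : ℕ → ℤ
  | 0 => 0
  | n + 1 =>
    if (n + 1) % 2 = 0 then -s ((n + 1) / 2)
    else s (n / 2) + 1
decreasing_by all_goals omega

lemma s_even (k : ℕ) : s (2 * k) = -s k := by
  cases k with
  | zero => simp [s]
  | succ m =>
    show s (2 * m + 1 + 1) = _
    rw [s]
    have h : (2 * m + 1 + 1) % 2 = 0 := by omega
    rw [if_pos h]
    have h2 : (2 * m + 1 + 1) / 2 = m + 1 := by omega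
    rw [h2]

lemma s_odd (k : ℕ) : s (2 * k + 1) = s k + 1 := by
  rw [s]
  have h : ¬ (2 * k + 1) % 2 = 0 := by omega
  rw [if_neg h]
  have h2 : 2 * k / 2 = k := by omega
  rw [h2]

theorem stmt14 (n : ℕ) : s n ≤ 0 ∨ s (n + 1) ≤ 0 ∨ s (n + 2) ≤ 0 := by
  rcases Nat.even_or_odd n with ⟨k, hk⟩ | ⟨k, hk⟩
  · have h1 : s n = -s k := by rw [hk, ← two_mul, s_even]
    have h2 : s (n + 1) = s k + 1 := by rw [hk, ← two_mul, s_odd]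
    rcases le_or_gt (s k) (-1) with h | h
    · right; left; omega
    · left; omega
  · have h2 : s (n + 1) = -s (k + 1) := by
      have : n + 1 = 2 * (k + 1) := by omega
      rw [this, s_even]
    have h3 : s (n + 2) = s (k + 1) + 1 := by
      have : n + 2 = 2 * (k + 1) + 1 := by omega
      rw [this, s_odd]
    rcases le_or_gt (s (k + 1)) (-1) with h | h
    · right; right; omega
    · right; left; omega
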